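/- arXiv:math-ph/0312035 — 2 statements merged into one kernel-verified Lean document; each statement's English description precedes it below -/
import Mathlib

section
/- For every integer N ≥ 2, the 0-1 matrix A_N of the Markov partition is irreducible: for every pair of indices i = (k, t) and j = (ℓ, s) in {1,…,N} × ℙ¹(𝔽₂) there exists an integer m ≥ 1 such that the (i, j) entry of the m-th power A_N^m is strictly positive (equivalently, the directed graph on {1,…,N} × ℙ¹(𝔽₂) with an edge from j to i whenever A_{ij} = 1 is strongly connected). -/
open Matrix

/-- The projective line `ℙ¹(𝔽₂)` over the field with two elements. -/
abbrev P1F2 := Projectivization (ZMod 2) (Fin 2 → ZMod 2)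

instance : Finite P1F2 := Quotient.finite _

noncomputable instance : Fintype P1F2 := Fintype.ofFinite _

noncomputable instance : DecidableEq P1F2 := Classical.decEq _

/-- The Möbius (projective linear) action of an invertible `2×2` matrix over `𝔽₂`
on the projective line `ℙ¹(𝔽₂)`. -/
noncomputable def mobius (M : Matrix (Fin 2) (Fin 2) (ZMod 2)) (h : Invertible M) :
    P1F2 → P1F2 :=
  Projectivization.map (M.toLinearEquiv' h).toLinearMap (M.toLinearEquiv' h).injective

/-- Reduction mod 2 of an integer `2×2` matrix. -/
def red2 (m : Matrix (Fin 2) (Fin 2) ℤ) : Matrix (Fin 2) (Fin 2) (ZMod 2) :=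
  m.map (Int.cast : ℤ → ZMod 2)

/-- The Möbius action on `ℙ¹(𝔽₂)` of the mod-2 reduction of the integer matrix
with rows `(-ℓ, 1)` and `(1, 0)`. -/
noncomputable def gAct (l : ℤ) : P1F2 → P1F2 :=
  mobius (red2 !![-l, 1; 1, 0])
    (Matrix.invertibleOfIsUnitDet _ (by
      simp [red2, Matrix.det_fin_two, Matrix.map_apply]))

/-- The 0-1 matrix `A_N` of the Markov partition, indexed by pairs `(k, t)` with
`k ∈ {1, …, N}` (encoded as `k : Fin N`, representing the digit `k+1`) and
`t ∈ ℙ¹(𝔽₂)`; the entry at `((k,t), (ℓ,s))` is `1` iff `t` is the image of `s` under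
the Möbius action of the mod-2 reduction of the matrix with rows `(-ℓ, 1)`, `(1, 0)`. -/
noncomputable def markovMatrix (N : ℕ) : Matrix (Fin N × P1F2) (Fin N × P1F2) ℕ :=
  fun i j => if i.2 = gAct ((j.1 : ℕ) + 1 : ℤ) j.2 then 1 else 0


section Aux

private def pv0 : Fin 2 → ZMod 2 := ![1, 0]
private def pv1 : Fin 2 → ZMod 2 := ![0, 1]
private def pv2 : Fin 2 → ZMod 2 := ![1, 1]

private noncomputable def p0 : P1F2 := Projectivization.mk _ pv0 (by decide)
private noncomputable def p1 : P1F2 := Projectivization.mk _ pv1 (by decide)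
private noncomputable def p2 : P1F2 := Projectivization.mk _ pv2 (by decide)

private lemma mk_congr {v w : Fin 2 → ZMod 2} (h : v = w) (hv : v ≠ 0) :
    Projectivization.mk (ZMod 2) v hv = Projectivization.mk (ZMod 2) w (h ▸ hv) := by
  subst h; rfl

private lemma tri (t : P1F2) : t = p0 ∨ t = p1 ∨ t = p2 := by
  induction t using Projectivization.ind with
  | h v hv =>
    have key : ∀ x : ZMod 2, x = 0 ∨ x = 1 := by decide
    have hv' : v = ![v 0, v 1] := by funext i; fin_cases i <;> rfl
    rcases key (v 0) with h0 | h0 <;> rcases key (v 1) with h1 | h1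
    · exact absurd (by rw [hv', h0, h1]; funext i; fin_cases i <;> rfl) hv
    · right; left; unfold p1; exact mk_congr (by rw [hv', h0, h1]; rfl) hv
    · left; unfold p0; exact mk_congr (by rw [hv', h0, h1]; rfl) hv
    · right; right; unfold p2; exact mk_congr (by rw [hv', h0, h1]; rfl) hv

private lemma gAct_mk (l : ℤ) (v : Fin 2 → ZMod 2) (hv : v ≠ 0)
    (hw : (red2 !![-l,1;1,0]).mulVec v ≠ 0) :
    gAct l (Projectivization.mk _ v hv) =
      Projectivization.mk _ ((red2 !![-l,1;1,0]).mulVec v) hw := by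
  rw [gAct, mobius, Projectivization.map_mk]
  exact mk_congr (by simp [Matrix.toLinearEquiv', Matrix.toLin'_apply]) _

private lemma a0 : gAct 1 p0 = p2 := by
  rw [p0, gAct_mk _ _ _ (by decide)]; exact mk_congr (by decide) _
private lemma a1 : gAct 1 p1 = p0 := by
  rw [p1, gAct_mk _ _ _ (by decide)]; exact mk_congr (by decide) _
private lemma a2 : gAct 1 p2 = p1 := by
  rw [p2, gAct_mk _ _ _ (by decide)]; exact mk_congr (by decide) _

private lemma it2 (f : P1F2 → P1F2) (x : P1F2) : f^[2] x = f (f x) := rfl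

private lemma markov_step {N m : ℕ} {j : Fin N × P1F2} {d : Fin N} {t : P1F2}
    (h : 0 < (markovMatrix N ^ m) (d, t) j) (d' : Fin N) :
    0 < (markovMatrix N ^ (m + 1)) (d', gAct ((d : ℕ) + 1 : ℤ) t) j := by
  rw [pow_succ', Matrix.mul_apply]
  apply Finset.sum_pos' (fun _ _ => Nat.zero_le _)
  refine ⟨(d, t), Finset.mem_univ _, ?_⟩
  have h1 : markovMatrix N (d', gAct ((d : ℕ) + 1 : ℤ) t) (d, t) = 1 := by
    simp [markovMatrix]
  rw [h1, one_mul]; exact h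

end Aux

/-- For every integer `N ≥ 2`, the matrix `A_N` of the Markov partition is irreducible:
for every pair of indices `i = (k,t)` and `j = (ℓ,s)` there exists `m ≥ 1` such that
the `(i,j)` entry of the power `A_N^m` is strictly positive (equivalently, the directed
graph with an edge from `j` to `i` whenever `A_{ij} = 1` is strongly connected). -/
theorem markovMatrix_irreducible (N : ℕ) (hN : 2 ≤ N) (i j : Fin N × P1F2) :
    ∃ m : ℕ, 1 ≤ m ∧ 0 < (markovMatrix N ^ m) i j := by
  obtain ⟨k, t⟩ := i
  have hpos : 0 < N := by omega
  set t0 := gAct ((j.1 : ℕ) + 1 : ℤ) j.2 with ht0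
  have hreach : ∀ n, ∀ d' : Fin N,
      0 < (markovMatrix N ^ (n + 1)) (d', (gAct 1)^[n] t0) j := by
    intro n
    induction n with
    | zero =>
      intro d'
      simp only [Function.iterate_zero, id_eq, pow_one]
      simp [markovMatrix, ht0]
    | succ n ih =>
      intro d'
      rw [Function.iterate_succ_apply']
      have hs := markov_step (ih ⟨0, hpos⟩) d'
      have e : (((⟨0, hpos⟩ : Fin N) : ℕ) + 1 : ℤ) = 1 := by norm_num
      rwa [e] at hs
  suffices h : ∃ n, (gAct 1)^[n] t0 = t by
    obtain ⟨n, hn⟩ := h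
    exact ⟨n + 1, by omega, by rw [← hn]; exact hreach n k⟩
  rcases tri t0 with h | h | h <;> rcases tri t with h' | h' | h' <;> rw [h, h'] <;>
    first
      | exact ⟨0, rfl⟩
      | (refine ⟨1, ?_⟩; rw [Function.iterate_one]; exact a0)
      | (refine ⟨1, ?_⟩; rw [Function.iterate_one]; exact a1)
      | (refine ⟨1, ?_⟩; rw [Function.iterate_one]; exact a2)
      | (refine ⟨2, ?_⟩; rw [it2, a0]; exact a2)
      | (refine ⟨2, ?_⟩; rw [it2, a1]; exact a0)
      | (refine ⟨2, ?_⟩; rw [it2, a2]; exact a1)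
end

section
/- For every integer N ≥ 2, the 0-1 matrix A_N of the Markov partition is irreducible and aperiodic, i.e. primitive: there exists an integer m ≥ 1 such that every entry of the m-th power A_N^m is strictly positive. -/
open Matrix

namespace MarkovAux

lemma mk_congr {v w : Fin 2 → ZMod 2} (hv : v ≠ 0) (hw : w ≠ 0) (h : v = w) :
    Projectivization.mk (ZMod 2) v hv = Projectivization.mk (ZMod 2) w hw := by
  subst h; rfl

lemma gAct_mk (l : ℤ) (v : Fin 2 → ZMod 2) (hv : v ≠ 0) :
    gAct l (Projectivization.mk (ZMod 2) v hv) =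
      Projectivization.mk (ZMod 2) ((red2 !![-l, 1; 1, 0]) *ᵥ v)
        (by
          intro h
          apply hv
          have hinv := Matrix.invertibleOfIsUnitDet (red2 !![-l, 1; 1, 0]) (by
            simp [red2, Matrix.det_fin_two, Matrix.map_apply])
          have := congrArg (fun w => (⅟(red2 !![-l, 1; 1, 0])) *ᵥ w) h
          rw [Matrix.mulVec_mulVec, invOf_mul_self, Matrix.one_mulVec, Matrix.mulVec_zero] at this
          exact this) := by
  unfold gAct mobius
  rw [Projectivization.map_mk]
  exact mk_congr _ _ (by simp [Matrix.toLinearEquiv'])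

noncomputable def P0 : P1F2 := Projectivization.mk (ZMod 2) ![1, 0] (by decide)
noncomputable def P1 : P1F2 := Projectivization.mk (ZMod 2) ![0, 1] (by decide)
noncomputable def P2 : P1F2 := Projectivization.mk (ZMod 2) ![1, 1] (by decide)

lemma classify (t : P1F2) : t = P0 ∨ t = P1 ∨ t = P2 := by
  induction t using Projectivization.ind with
  | h v hv =>
    have key : ∀ w : Fin 2 → ZMod 2, w ≠ 0 → w = ![1, 0] ∨ w = ![0, 1] ∨ w = ![1, 1] := by decide
    have this := key v hv
    rcases this with h | h | h
    · exact Or.inl (mk_congr _ _ h)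
    · exact Or.inr (Or.inl (mk_congr _ _ h))
    · exact Or.inr (Or.inr (mk_congr _ _ h))

lemma ga_P0 : gAct 1 P0 = P2 := by rw [P0, gAct_mk]; exact mk_congr _ _ (by decide)
lemma ga_P1 : gAct 1 P1 = P0 := by rw [P1, gAct_mk]; exact mk_congr _ _ (by decide)
lemma ga_P2 : gAct 1 P2 = P1 := by rw [P2, gAct_mk]; exact mk_congr _ _ (by decide)
lemma gb_P0 : gAct 2 P0 = P1 := by rw [P0, gAct_mk]; exact mk_congr _ _ (by decide)
lemma gb_P1 : gAct 2 P1 = P0 := by rw [P1, gAct_mk]; exact mk_congr _ _ (by decide)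
lemma gb_P2 : gAct 2 P2 = P2 := by rw [P2, gAct_mk]; exact mk_congr _ _ (by decide)

/-- Every point of `ℙ¹(𝔽₂)` can be reached from any other by a word of length exactly 3
in the maps `gAct 1` and `gAct 2`. -/
lemma word (N : ℕ) (hN : 2 ≤ N) (t s : P1F2) :
    ∃ d1 d2 d3 : Fin N,
      t = gAct ((d1 : ℕ) + 1 : ℤ) (gAct ((d2 : ℕ) + 1 : ℤ) (gAct ((d3 : ℕ) + 1 : ℤ) s)) := by
  set a : Fin N := ⟨0, by omega⟩ with ha
  set b : Fin N := ⟨1, by omega⟩ with hb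
  have hca : ((a : ℕ) + 1 : ℤ) = 1 := by simp [ha]
  have hcb : ((b : ℕ) + 1 : ℤ) = 2 := by simp [hb]
  rcases classify s with hs | hs | hs <;> rcases classify t with ht | ht | ht <;>
    subst hs <;> subst ht
  · exact ⟨a, a, a, by rw [hca, ga_P0, ga_P2, ga_P1]⟩
  · exact ⟨b, b, b, by rw [hcb, gb_P0, gb_P1, gb_P0]⟩
  · exact ⟨a, b, b, by rw [hca, hcb, gb_P0, gb_P1, ga_P0]⟩
  · exact ⟨b, b, b, by rw [hcb, gb_P1, gb_P0, gb_P1]⟩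
  · exact ⟨a, a, a, by rw [hca, ga_P1, ga_P0, ga_P2]⟩
  · exact ⟨b, a, a, by rw [hca, hcb, ga_P1, ga_P0, gb_P2]⟩
  · exact ⟨a, a, b, by rw [hca, hcb, gb_P2, ga_P2, ga_P1]⟩
  · exact ⟨a, b, b, by rw [hca, hcb, gb_P2, gb_P2, ga_P2]⟩
  · exact ⟨a, a, a, by rw [hca, ga_P2, ga_P1, ga_P0]⟩

lemma pow_step {n : Type*} [Fintype n] [DecidableEq n] (M : Matrix n n ℕ) (m : ℕ)
    (i k j : n) (h1 : 0 < M i k) (h2 : 0 < (M ^ m) k j) : 0 < (M ^ (m + 1)) i j := by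
  rw [pow_succ', Matrix.mul_apply]
  calc 0 < M i k * (M ^ m) k j := Nat.mul_pos h1 h2
    _ ≤ ∑ p, M i p * (M ^ m) p j :=
      Finset.single_le_sum (f := fun p => M i p * (M ^ m) p j)
        (fun p _ => Nat.zero_le _) (Finset.mem_univ k)

lemma pow4_pos (N : ℕ) (hN : 2 ≤ N) (i j : Fin N × P1F2) :
    0 < (markovMatrix N ^ 4) i j := by
  obtain ⟨k, t⟩ := i
  obtain ⟨l, s⟩ := j
  obtain ⟨d1, d2, d3, hw⟩ := word N hN t (gAct ((l : ℕ) + 1 : ℤ) s)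
  have h1 : 0 < (markovMatrix N ^ 1) (d3, gAct ((l : ℕ) + 1 : ℤ) s) (l, s) := by
    rw [pow_one]; simp [markovMatrix]
  have h2 := pow_step (markovMatrix N) 1
    (d2, gAct ((d3 : ℕ) + 1 : ℤ) (gAct ((l : ℕ) + 1 : ℤ) s))
    (d3, gAct ((l : ℕ) + 1 : ℤ) s) (l, s) (by simp [markovMatrix]) h1
  have h3 := pow_step (markovMatrix N) 2
    (d1, gAct ((d2 : ℕ) + 1 : ℤ) (gAct ((d3 : ℕ) + 1 : ℤ) (gAct ((l : ℕ) + 1 : ℤ) s)))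
    (d2, gAct ((d3 : ℕ) + 1 : ℤ) (gAct ((l : ℕ) + 1 : ℤ) s)) (l, s) (by simp [markovMatrix]) h2
  have h4 := pow_step (markovMatrix N) 3 (k, t)
    (d1, gAct ((d2 : ℕ) + 1 : ℤ) (gAct ((d3 : ℕ) + 1 : ℤ) (gAct ((l : ℕ) + 1 : ℤ) s)))
    (l, s) (by simp [markovMatrix, hw]) h3
  exact h4

end MarkovAux

/-- For every integer `N ≥ 2`, the matrix `A_N` of the Markov partition is irreducible
and aperiodic, i.e. primitive: there exists `m ≥ 1` such that every entry of the power
`A_N^m` is strictly positive. -/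
theorem markovMatrix_primitive (N : ℕ) (hN : 2 ≤ N) :
    (∀ i j : Fin N × P1F2, ∃ m : ℕ, 1 ≤ m ∧ 0 < (markovMatrix N ^ m) i j) ∧
      ∃ m : ℕ, 1 ≤ m ∧ ∀ i j : Fin N × P1F2, 0 < (markovMatrix N ^ m) i j := by
  refine ⟨fun i j => ⟨4, by norm_num, MarkovAux.pow4_pos N hN i j⟩,
    ⟨4, by norm_num, fun i j => MarkovAux.pow4_pos N hN i j⟩⟩
end
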